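/- For every 0 < α < 1, the 3×3 Jacobian matrix of partial derivatives of F evaluated at the equilibrium point K₂₋ = ((2 + α - √(α² + 20α + 4))/(2α), 0, (2-α)/α) has eigenvalues -2/α, -√(α² + 20α + 4)/α, and (7α - 2 - √(α² + 20α + 4))/(2α), and all three eigenvalues are strictly negative; hence K₂₋ is a hyperbolic sink (stable node). -/

import Mathlib

open Polynomial

/-- The vacuum form-independent dynamical system with parameter `α`, as a map on
`Fin 3 → ℝ` in coordinates `(u₁, u₄, q)`. -/
noncomputable def vacuumFormIndepField (α : ℝ) (p : Fin 3 → ℝ) : Fin 3 → ℝ :=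
  ![p 0 * (p 0 - 2 - p 2) - 2 * p 2 + 6 * (p 1)^2 - 2,
    p 1 * (2 - p 2 + p 0),
    -2 * (p 2 - (1-α)/α) * (p 2 - (2-α)/α)]

/-- The 3×3 Jacobian matrix of partial derivatives of the vacuum
form-independent dynamical system at a point `p`. -/
noncomputable def vacuumFormIndepJacobian (α : ℝ) (p : Fin 3 → ℝ) :
    Matrix (Fin 3) (Fin 3) ℝ :=
  Matrix.of fun i j =>
    deriv (fun s : ℝ => vacuumFormIndepField α (Function.update p j s) i) (p j)

/-! On the plane `u₄ = 0` the Jacobian is upper triangular: the `q`-equation is decoupled and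
the `u₄`-equation is a multiple of `u₄`. So at `K₂₋` the eigenvalues are the diagonal entries,
and the only sign needing an argument is that of `7α - 2 - √(α² + 20α + 4)`, which is negative
because `(7α - 2)² - (α² + 20α + 4) = 48α(α - 1) < 0`. -/

theorem vacuumFormIndepJacobian_eq (α : ℝ) (p : Fin 3 → ℝ) :
    vacuumFormIndepJacobian α p =
      !![2 * p 0 - 2 - p 2, 12 * p 1, -p 0 - 2;
         p 1, 2 - p 2 + p 0, -p 1;
         0, 0, -2 * (2 * p 2 - (1 - α) / α - (2 - α) / α)] := by
  ext i j
  fin_cases i <;> fin_cases j <;>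
    simp (disch := fun_prop) [vacuumFormIndepJacobian, vacuumFormIndepField,
      Function.update_apply, deriv_fun_mul, deriv_fun_sub] <;> ring

theorem vacuumFormIndepJacobian_isUpperTriangular {α : ℝ} {p : Fin 3 → ℝ} (hp : p 1 = 0) :
    (vacuumFormIndepJacobian α p).IsUpperTriangular := by
  intro i j hji
  fin_cases i <;> fin_cases j <;> simp_all [vacuumFormIndepJacobian_eq]

theorem charpoly_vacuumFormIndepJacobian {α : ℝ} {p : Fin 3 → ℝ} (hp : p 1 = 0) :
    (vacuumFormIndepJacobian α p).charpoly =
      (X - C (2 * p 0 - 2 - p 2)) * (X - C (2 - p 2 + p 0)) *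
        (X - C (-2 * (2 * p 2 - (1 - α) / α - (2 - α) / α))) := by
  rw [Matrix.charpoly_of_isUpperTriangular _ (vacuumFormIndepJacobian_isUpperTriangular hp),
    Fin.prod_univ_three, vacuumFormIndepJacobian_eq]
  simp

theorem seven_mul_sub_two_lt_sqrt {α : ℝ} (hα : 0 < α) (hα' : α < 1) :
    7 * α - 2 < Real.sqrt (α ^ 2 + 20 * α + 4) :=
  Real.lt_sqrt_of_sq_lt (by nlinarith)

/-- For every `0 < α < 1`, the Jacobian at the equilibrium point
`K₂₋ = ((2 + α - √(α² + 20α + 4))/(2α), 0, (2-α)/α)` has eigenvalues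
`-2/α`, `-√(α² + 20α + 4)/α` and `(7α - 2 - √(α² + 20α + 4))/(2α)`, all strictly
negative; hence `K₂₋` is a hyperbolic sink (stable node). -/
theorem K2_minus_jacobian_sink (α : ℝ) (hα : 0 < α) (hα' : α < 1) :
    ((vacuumFormIndepJacobian α
        ![(2 + α - Real.sqrt (α^2 + 20*α + 4))/(2*α), 0, (2-α)/α]).charpoly =
      (X - C (-2/α)) * (X - C (-Real.sqrt (α^2 + 20*α + 4)/α)) *
        (X - C ((7*α - 2 - Real.sqrt (α^2 + 20*α + 4))/(2*α)))) ∧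
    -2/α < 0 ∧ -Real.sqrt (α^2 + 20*α + 4)/α < 0 ∧
    (7*α - 2 - Real.sqrt (α^2 + 20*α + 4))/(2*α) < 0 := by
  set s := Real.sqrt (α ^ 2 + 20 * α + 4)
  have hs : 0 < s := Real.sqrt_pos.mpr (by positivity)
  refine ⟨?_, div_neg_of_neg_of_pos (by norm_num) hα, div_neg_of_neg_of_pos (by linarith) hα,
    div_neg_of_neg_of_pos (by linarith [seven_mul_sub_two_lt_sqrt hα hα']) (by linarith)⟩
  rw [charpoly_vacuumFormIndepJacobian rfl]
  have hJ₀₀ : 2 * ((2 + α - s) / (2 * α)) - 2 - (2 - α) / α = -s / α := by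
    field_simp; ring
  have hJ₁₁ : 2 - (2 - α) / α + (2 + α - s) / (2 * α) = (7 * α - 2 - s) / (2 * α) := by
    field_simp; ring
  have hJ₂₂ : -2 * (2 * ((2 - α) / α) - (1 - α) / α - (2 - α) / α) = -2 / α := by
    field_simp; ring
  simp only [Matrix.cons_val_zero, Matrix.cons_val_two, Matrix.head_cons,
    Matrix.tail_cons, hJ₀₀, hJ₁₁, hJ₂₂]
  ring
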